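/- Let f(G) be the number of strongly connected partial orientations of a connected multigraph G. For any non-bridge edge e, f(G) = f(G \ e) + 2·f(G/e); if G consists of a single bridge, f(G) = 1; if e is a loop, f(G) = 3·f(G \ e). -/

import Mathlib

open Classical

noncomputable section

/-- A finite multigraph, given by a finite vertex type, a finite edge type, and
two endpoint maps (which also provide a built-in reference direction for each edge). -/
structure Multigraph where
  V : Type
  E : Type
  [fintypeV : Fintype V]
  [fintypeE : Fintype E]
  fst : E → V
  snd : E → V

attribute [instance] Multigraph.fintypeV Multigraph.fintypeE

namespace Multigraph

variable (G : Multigraph)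

/-- Adjacency between vertices using only edges in `S`. -/
def adjOn (S : Set G.E) (u v : G.V) : Prop :=
  ∃ e ∈ S, (G.fst e = u ∧ G.snd e = v) ∨ (G.fst e = v ∧ G.snd e = u)

/-- Reachability (in the undirected sense) using only edges in `S`. -/
def reachOn (S : Set G.E) : G.V → G.V → Prop :=
  Relation.ReflTransGen (G.adjOn S)

def Connected : Prop := ∀ u v : G.V, G.reachOn Set.univ u v

def IsLoop (e : G.E) : Prop := G.fst e = G.snd e

def IsBridge (e : G.E) : Prop := ¬ G.reachOn {f | f ≠ e} (G.fst e) (G.snd e)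

/-- Number of connected components of the spanning subgraph with edge set `S`. -/
def comps (S : Set G.E) : ℕ := Nat.card (Quot (G.reachOn S))

/-- Rank of an edge set: `|V|` minus the number of components it spans. -/
def rk (S : Set G.E) : ℕ := Fintype.card G.V - G.comps S

/-- The Tutte polynomial, via the corank-nullity (subgraph) expansion. -/
def tutte (x y : ℚ) : ℚ :=
  ∑ S : Finset G.E,
    (x - 1) ^ (G.rk Set.univ - G.rk (↑S : Set G.E)) * (y - 1) ^ (S.card - G.rk (↑S : Set G.E))

/-- The genus (cycle rank) `|E| - |V| + 1` of a connected multigraph. -/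
def genus : ℕ := Fintype.card G.E + 1 - Fintype.card G.V

/-- A partial orientation: each edge is unoriented (`none`), oriented in the reference
direction `fst → snd` (`some true`), or oriented oppositely (`some false`). -/
abbrev PartialOrientation := G.E → Option Bool

/-- The tail of edge `e` traversed in direction `b` (`true` = `fst → snd`). -/
def dtail (e : G.E) (b : Bool) : G.V := if b then G.fst e else G.snd e

/-- The head of edge `e` traversed in direction `b` (`true` = `fst → snd`). -/
def dhead (e : G.E) (b : Bool) : G.V := if b then G.snd e else G.fst e

/-- Directed adjacency under a partial orientation. -/
def dAdj (O : G.PartialOrientation) (u v : G.V) : Prop :=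
  ∃ e b, O e = some b ∧ G.dtail e b = u ∧ G.dhead e b = v

/-- Directed reachability under a partial orientation. -/
def dReach (O : G.PartialOrientation) : G.V → G.V → Prop :=
  Relation.ReflTransGen (G.dAdj O)

/-- A partial orientation is acyclic iff it contains no directed cycle, equivalently there
is no oriented edge together with a directed path from its head back to its tail. -/
def Acyclic (O : G.PartialOrientation) : Prop :=
  ¬ ∃ e b, O e = some b ∧ G.dReach O (G.dhead e b) (G.dtail e b)

/-- `e` crosses the cut determined by the vertex set `X`. -/
def crosses (X : Set G.V) (e : G.E) : Prop := ¬ ((G.fst e ∈ X) ↔ (G.snd e ∈ X))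

/-- `(X, Xᶜ)` is a directed cut of `O`: the cut is nonempty and every crossing edge is
oriented from `X` to `Xᶜ`. -/
def IsDirCut (O : G.PartialOrientation) (X : Set G.V) : Prop :=
  (∃ e, G.crosses X e) ∧
  ∀ e, G.crosses X e →
    (G.fst e ∈ X → O e = some true) ∧ (G.snd e ∈ X → O e = some false)

/-- A partial orientation is strongly connected iff it contains no directed cut. -/
def StronglyConnected (O : G.PartialOrientation) : Prop :=
  ¬ ∃ X, G.IsDirCut O X

/-- A directed cycle of `O`: a nonempty cyclically chained list of oriented steps using
pairwise distinct edges, each oriented in `O` as traversed. -/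
def IsDCycle (O : G.PartialOrientation) (c : List (G.E × Bool)) : Prop :=
  c ≠ [] ∧ (∀ s ∈ c, O s.1 = some s.2) ∧
  List.Chain' (fun s t => G.dhead s.1 s.2 = G.dtail t.1 t.2) (c ++ c.take 1) ∧
  (c.map Prod.fst).Nodup

/-- A half-open path: a directed path (all steps but the last oriented in `O`) followed by
an unoriented edge, imagined with the direction that would extend the path. -/
def IsHalfOpenPath (O : G.PartialOrientation) (p : List (G.E × Bool)) : Prop :=
  2 ≤ p.length ∧
  List.Chain' (fun s t => G.dhead s.1 s.2 = G.dtail t.1 t.2) p ∧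
  (p.map Prod.fst).Nodup ∧
  (∀ s ∈ p.dropLast, O s.1 = some s.2) ∧
  ∀ h : p ≠ [], O (p.getLast h).1 = none

/-- `O'` is obtained from `O` by reversing one directed cut. -/
def cutRev (O O' : G.PartialOrientation) : Prop :=
  ∃ X, G.IsDirCut O X ∧ (∀ e, ¬ G.crosses X e → O' e = O e) ∧
    (∀ e, G.crosses X e → O' e = (O e).map not)

/-- `O'` is obtained from `O` by reversing one directed cycle. -/
def cycleRev (O O' : G.PartialOrientation) : Prop :=
  ∃ c, G.IsDCycle O c ∧ (∀ e, e ∉ c.map Prod.fst → O' e = O e) ∧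
    (∀ s ∈ c, O' s.1 = some (!s.2))

/-- `O'` is obtained from `O` by a Jacob's ladder cascade along a half-open path:
the first edge becomes unoriented and all other edges get the reversed direction. -/
def cascade (O O' : G.PartialOrientation) : Prop :=
  ∃ p, G.IsHalfOpenPath O p ∧ (∀ e, e ∉ p.map Prod.fst → O' e = O e) ∧
    (∀ h : p ≠ [], O' (p.head h).1 = none) ∧
    (∀ s ∈ p.tail, O' s.1 = some (!s.2))

/-- An edge pivot at a vertex `v`: unorient an edge `e'` oriented into `v` and orient a
previously unoriented edge `e` toward `v`. -/
def pivot (O O' : G.PartialOrientation) : Prop :=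
  ∃ e e' b b', e ≠ e' ∧ O e = none ∧ O e' = some b' ∧
    G.dhead e b = G.dhead e' b' ∧
    O' e = some b ∧ O' e' = none ∧ ∀ f, f ≠ e → f ≠ e' → O' f = O f

/-- A directed cut of `O` is minimal w.r.t. `(<, A)` if its `<`-minimum crossing edge is
oriented as in the reference orientation `A`. -/
def MinimalCut [LinearOrder G.E] (A : G.E → Bool) (O : G.PartialOrientation)
    (X : Set G.V) : Prop :=
  ∃ e, G.crosses X e ∧ (∀ e', G.crosses X e' → e ≤ e') ∧ O e = some (A e)

/-- A partial orientation is cut minimal if every directed cut in it is minimal. -/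
def CutMinimal [LinearOrder G.E] (A : G.E → Bool) (O : G.PartialOrientation) : Prop :=
  ∀ X, G.IsDirCut O X → G.MinimalCut A O X

/-- A list of steps is minimal w.r.t. `(<, A)` if its `<`-minimum edge is traversed in the
direction given by the reference orientation `A`. -/
def MinimalSteps [LinearOrder G.E] (A : G.E → Bool) (c : List (G.E × Bool)) : Prop :=
  ∃ s ∈ c, (∀ t ∈ c, s.1 ≤ t.1) ∧ s.2 = A s.1

/-- A partial orientation is cycle minimal if every directed cycle in it is minimal. -/
def CycleMinimal [LinearOrder G.E] (A : G.E → Bool) (O : G.PartialOrientation) : Prop :=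
  ∀ c, G.IsDCycle O c → G.MinimalSteps A c

/-- A partial orientation is cycle-path minimal if every directed cycle and every
half-open path in it is minimal. -/
def CyclePathMinimal [LinearOrder G.E] (A : G.E → Bool) (O : G.PartialOrientation) : Prop :=
  G.CycleMinimal A O ∧ ∀ p, G.IsHalfOpenPath O p → G.MinimalSteps A p

/-- The indegree of a vertex: the number of edges oriented toward it. -/
def indeg (O : G.PartialOrientation) (v : G.V) : ℕ :=
  Nat.card {e : G.E // ∃ b, O e = some b ∧ G.dhead e b = v}

/-- Orient the (previously unoriented) edge `e` in direction `b`. -/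
def orient (O : G.PartialOrientation) (e : G.E) (b : Bool) : G.PartialOrientation :=
  fun f => if f = e then some b else O f

/-- Deletion of the edge `e`. -/
def deleteEdge (e : G.E) : Multigraph where
  V := G.V
  E := {f : G.E // f ≠ e}
  fintypeE := Subtype.fintype _
  fst := fun f => G.fst f.1
  snd := fun f => G.snd f.1

/-- Contraction of the edge `e`: identify its two endpoints and remove `e`. -/
def contractEdge (e : G.E) : Multigraph where
  V := Quot (fun a b => a = G.fst e ∧ b = G.snd e)
  E := {f : G.E // f ≠ e}
  fintypeV := Fintype.ofSurjective (Quot.mk _) (Quot.mk_surjective)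
  fintypeE := Subtype.fintype _
  fst := fun f => Quot.mk _ (G.fst f.1)
  snd := fun f => Quot.mk _ (G.snd f.1)

/-- The number of acyclic partial orientations of `G`. -/
def numAcyclic : ℕ := Nat.card {O : G.PartialOrientation // G.Acyclic O}

/-- The number of strongly connected partial orientations of `G`. -/
def numStrong : ℕ := Nat.card {O : G.PartialOrientation // G.StronglyConnected O}

end Multigraph

/-!
Split a partial orientation of `G` into its value `v` on `e` and a partial orientation `O'` of
the other edges. A directed cut not crossed by `e` is a directed cut of `O'` in `G / e`; one
crossed by `e` forces `v = some b`, and is then a set `X` containing the tail but not the head of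
`e` (traversed as `b`) that all other crossing edges leave (`IsDirCutAcross e b O' X`). So the
extension is strongly connected iff `O'` is strongly connected in `G / e` and, when `v = some b`,
has no cut across `e` in direction `b`.

If `e` is not a bridge, another edge crosses every cut across `e`, so `O'` is strongly connected
in `G \ e` iff it is so in `G / e` and has no cut across `e` in either direction. Moreover no
strongly connected `O'` of `G / e` has cuts `X`, `Y` across `e` in both directions: `X ∪ Y` or
`X ∩ Y` would be a directed cut of `G / e`, unless `Y = Xᶜ`, which the other edge crossing `X`
forbids. Inclusion–exclusion over the two orientations of `e` then gives
`f(G) = f(G / e) + (f(G / e) + f(G \ e))`. A bridge has a cut across it in both directions (its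
side of `G \ e`), so it stays unoriented; a loop crosses no cut, so all three values of `v`
behave alike.
-/

theorem Nat.card_subtype_add_card_subtype {α : Type*} [Finite α] {p q r s : α → Prop}
    (hor : ∀ x, p x ∨ q x ↔ r x) (hand : ∀ x, p x ∧ q x ↔ s x) :
    Nat.card {x // p x} + Nat.card {x // q x} = Nat.card {x // r x} + Nat.card {x // s x} := by
  have hr : {x | r x} = {x | p x} ∪ {x | q x} := by ext x; exact (hor x).symm
  have hs : {x | s x} = {x | p x} ∩ {x | q x} := by ext x; exact (hand x).symm
  have key := Set.ncard_union_add_ncard_inter {x | p x} {x | q x}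
  rw [← hr, ← hs] at key
  simp only [← Nat.card_coe_set_eq] at key
  exact key.symm

namespace Multigraph

variable {G : Multigraph}

def IsOutward (O : G.PartialOrientation) (X : Set G.V) : Prop :=
  ∀ f, G.crosses X f → (G.fst f ∈ X → O f = some true) ∧ (G.snd f ∈ X → O f = some false)

lemma isDirCut_iff {O : G.PartialOrientation} {X : Set G.V} :
    G.IsDirCut O X ↔ (∃ f, G.crosses X f) ∧ G.IsOutward O X := Iff.rfl

lemma crosses_iff {X : Set G.V} {f : G.E} :
    G.crosses X f ↔ G.fst f ∈ X ∧ G.snd f ∉ X ∨ G.snd f ∈ X ∧ G.fst f ∉ X := by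
  unfold crosses; tauto

lemma isOutward_iff {O : G.PartialOrientation} {X : Set G.V} :
    G.IsOutward O X ↔ ∀ f, (G.fst f ∈ X → G.snd f ∉ X → O f = some true) ∧
      (G.snd f ∈ X → G.fst f ∉ X → O f = some false) := by
  unfold IsOutward crosses
  refine forall_congr' fun f => ?_
  by_cases h1 : G.fst f ∈ X <;> by_cases h2 : G.snd f ∈ X <;> simp [h1, h2]

lemma IsOutward.union {O : G.PartialOrientation} {X Y : Set G.V}
    (hX : G.IsOutward O X) (hY : G.IsOutward O Y) : G.IsOutward O (X ∪ Y) := by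
  rw [isOutward_iff] at *
  intro f
  constructor <;> rintro (h | h) hn <;> simp only [Set.mem_union, not_or] at hn
  exacts [(hX f).1 h hn.1, (hY f).1 h hn.2, (hX f).2 h hn.1, (hY f).2 h hn.2]

lemma IsOutward.inter {O : G.PartialOrientation} {X Y : Set G.V}
    (hX : G.IsOutward O X) (hY : G.IsOutward O Y) : G.IsOutward O (X ∩ Y) := by
  rw [isOutward_iff] at *
  intro f
  constructor <;> rintro ⟨hx, hy⟩ hn <;> simp only [Set.mem_inter_iff, not_and_or] at hn
  · rcases hn with hn | hn
    exacts [(hX f).1 hx hn, (hY f).1 hy hn]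
  · rcases hn with hn | hn
    exacts [(hX f).2 hx hn, (hY f).2 hy hn]

lemma not_crosses_of_isOutward_compl {O : G.PartialOrientation} {X : Set G.V} {f : G.E}
    (hX : G.IsOutward O X) (hXc : G.IsOutward O Xᶜ) : ¬ G.crosses X f := by
  rw [isOutward_iff] at hX hXc
  intro hf
  rcases crosses_iff.1 hf with ⟨h1, h2⟩ | ⟨h1, h2⟩
  · have := (hX f).1 h1 h2
    rw [(hXc f).2 h2 (not_not.2 h1)] at this
    simp at this
  · have := (hX f).2 h1 h2
    rw [(hXc f).1 h2 (not_not.2 h1)] at this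
    simp at this

lemma exists_crosses_of_reachOn {S : Set G.E} {X : Set G.V} {u v : G.V}
    (h : G.reachOn S u v) (hu : u ∈ X) (hv : v ∉ X) : ∃ f ∈ S, G.crosses X f := by
  induction h with
  | refl => exact absurd hu hv
  | @tail w x _ hwx ih =>
    by_cases hw : w ∈ X
    · obtain ⟨f, hfS, hf⟩ := hwx
      refine ⟨f, hfS, ?_⟩
      rcases hf with ⟨rfl, rfl⟩ | ⟨rfl, rfl⟩ <;> unfold crosses <;> tauto
    · exact ih hw

lemma reachOn_symm {S : Set G.E} {u v : G.V} (h : G.reachOn S u v) : G.reachOn S v u := by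
  induction h with
  | refl => exact .refl
  | tail _ hwx ih =>
    obtain ⟨f, hf, h⟩ := hwx
    exact ih.head ⟨f, hf, h.symm⟩

lemma stronglyConnected_unoriented : G.StronglyConnected fun _ => none := by
  rintro ⟨X, ⟨f, hf⟩, hout⟩
  rcases crosses_iff.1 hf with ⟨h, _⟩ | ⟨h, _⟩
  · simpa using (hout f hf).1 h
  · simpa using (hout f hf).2 h

lemma crosses_iff_dtail_mem {X : Set G.V} {e : G.E} (b : Bool) :
    G.crosses X e ↔ ¬ (G.dtail e b ∈ X ↔ G.dhead e b ∈ X) := by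
  cases b <;> simp only [crosses, dtail, dhead] <;> tauto

lemma crosses_of_dtail_mem {X : Set G.V} {e : G.E} {b : Bool}
    (ht : G.dtail e b ∈ X) (hh : G.dhead e b ∉ X) : G.crosses X e := by
  cases b <;> simp only [dtail, dhead] at ht hh <;> unfold crosses <;> tauto

lemma exists_dtail_mem_of_crosses {X : Set G.V} {e : G.E} (h : G.crosses X e) :
    ∃ b, G.dtail e b ∈ X ∧ G.dhead e b ∉ X := by
  rcases crosses_iff.1 h with h | h
  exacts [⟨true, h⟩, ⟨false, h⟩]

@[simp] lemma dtail_not (e : G.E) (b : Bool) : G.dtail e (!b) = G.dhead e b := by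
  cases b <;> rfl

@[simp] lemma dhead_not (e : G.E) (b : Bool) : G.dhead e (!b) = G.dtail e b := by
  cases b <;> rfl

variable {e : G.E}

@[simp] lemma deleteEdge_fst (f : (G.deleteEdge e).E) : (G.deleteEdge e).fst f = G.fst f.1 := rfl

@[simp] lemma deleteEdge_snd (f : (G.deleteEdge e).E) : (G.deleteEdge e).snd f = G.snd f.1 := rfl

lemma deleteEdge_isOutward_iff {O' : (G.deleteEdge e).PartialOrientation} {X : Set G.V} :
    (G.deleteEdge e).IsOutward O' X ↔ ∀ f : (G.deleteEdge e).E, G.crosses X f.1 →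
      (G.fst f.1 ∈ X → O' f = some true) ∧ (G.snd f.1 ∈ X → O' f = some false) := Iff.rfl

lemma deleteEdge_isDirCut_iff {O' : (G.deleteEdge e).PartialOrientation} {X : Set G.V} :
    (G.deleteEdge e).IsDirCut O' X ↔
      (∃ f : (G.deleteEdge e).E, G.crosses X f.1) ∧ (G.deleteEdge e).IsOutward O' X := Iff.rfl

variable (e) in
def extend (v : Option Bool) (O' : (G.deleteEdge e).PartialOrientation) : G.PartialOrientation :=
  (Equiv.funSplitAt e (Option Bool)).symm (v, O')

@[simp] lemma extend_apply_self (v : Option Bool) (O' : (G.deleteEdge e).PartialOrientation) :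
    extend e v O' e = v := by
  simp [extend]

@[simp] lemma extend_apply_val (v : Option Bool) (O' : (G.deleteEdge e).PartialOrientation)
    (f : (G.deleteEdge e).E) : extend e v O' f.1 = O' f :=
  dif_neg f.2

lemma extend_apply_of_ne (v : Option Bool) (O' : (G.deleteEdge e).PartialOrientation)
    {f : G.E} (hf : f ≠ e) : extend e v O' f = O' ⟨f, hf⟩ :=
  dif_neg hf

lemma extend_restrict (O : G.PartialOrientation) : extend e (O e) (fun f => O f.1) = O :=
  (Equiv.funSplitAt e (Option Bool)).symm_apply_apply O

variable (e) in
lemma card_subtype_eq_sum_extend (P : G.PartialOrientation → Prop) :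
    Nat.card {O // P O} =
      ∑ v : Option Bool,
        Nat.card {O' : (G.deleteEdge e).PartialOrientation // P (extend e v O')} := by
  rw [← Nat.card_sigma]
  exact Nat.card_congr <|
    ((Equiv.funSplitAt e (Option Bool)).symm.subtypeEquiv fun _ => Iff.rfl).symm.trans
      (Equiv.subtypeProdEquivSigmaSubtype fun v O' => P (extend e v O'))

lemma isOutward_extend_iff {v : Option Bool} {O' : (G.deleteEdge e).PartialOrientation}
    {X : Set G.V} :
    G.IsOutward (extend e v O') X ↔ (G.deleteEdge e).IsOutward O' X ∧
      (G.crosses X e → (G.fst e ∈ X → v = some true) ∧ (G.snd e ∈ X → v = some false)) := by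
  rw [deleteEdge_isOutward_iff]
  constructor
  · intro h
    exact ⟨fun f hf => by simpa using h f.1 hf, fun he => by simpa using h e he⟩
  · rintro ⟨hO', he⟩ f hf
    by_cases hfe : f = e
    · subst hfe
      simpa using he hf
    · simpa [extend_apply_of_ne _ _ hfe] using hO' ⟨f, hfe⟩ hf

lemma isDirCut_extend_iff_of_not_crosses {v : Option Bool}
    {O' : (G.deleteEdge e).PartialOrientation} {X : Set G.V} (he : ¬ G.crosses X e) :
    G.IsDirCut (extend e v O') X ↔ (G.deleteEdge e).IsDirCut O' X := by
  have hcross : (∃ f, G.crosses X f) ↔ ∃ f : (G.deleteEdge e).E, G.crosses X f.1 :=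
    ⟨fun ⟨f, hf⟩ => ⟨⟨f, fun hfe => he (hfe ▸ hf)⟩, hf⟩, fun ⟨f, hf⟩ => ⟨f.1, hf⟩⟩
  rw [isDirCut_iff, deleteEdge_isDirCut_iff, isOutward_extend_iff, hcross]
  simp [he]

variable (e) in
def IsDirCutAcross (b : Bool) (O' : (G.deleteEdge e).PartialOrientation) (X : Set G.V) : Prop :=
  (G.deleteEdge e).IsOutward O' X ∧ G.dtail e b ∈ X ∧ G.dhead e b ∉ X

lemma isDirCut_extend_iff_of_crosses {v : Option Bool}
    {O' : (G.deleteEdge e).PartialOrientation} {X : Set G.V} (he : G.crosses X e) :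
    G.IsDirCut (extend e v O') X ↔ ∃ b, v = some b ∧ IsDirCutAcross e b O' X := by
  have hcross : ∃ f, G.crosses X f := ⟨e, he⟩
  rw [isDirCut_iff, isOutward_extend_iff]
  rcases crosses_iff.1 he with ⟨h1, h2⟩ | ⟨h1, h2⟩ <;>
    rcases v with _ | _ | _ <;> simp [IsDirCutAcross, dtail, dhead, h1, h2, he, hcross]

lemma IsDirCutAcross.crosses {b : Bool} {O' : (G.deleteEdge e).PartialOrientation} {X : Set G.V}
    (h : IsDirCutAcross e b O' X) : G.crosses X e :=
  crosses_of_dtail_mem h.2.1 h.2.2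

variable (e) in
lemma stronglyConnected_contractEdge_iff (O' : (G.deleteEdge e).PartialOrientation) :
    (G.contractEdge e).StronglyConnected O' ↔
      ∀ X, ¬ G.crosses X e → ¬ (G.deleteEdge e).IsDirCut O' X := by
  constructor
  · rintro hsc X he ⟨⟨f, hf⟩, hout⟩
    have hX : ∀ a b : G.V, (a = G.fst e ∧ b = G.snd e) → (a ∈ X) = (b ∈ X) := by
      rintro a b ⟨rfl, rfl⟩
      exact propext (not_not.1 he)
    exact hsc ⟨fun q => Quot.lift (· ∈ X) hX q, ⟨f, hf⟩, hout⟩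
  · rintro h ⟨X', ⟨f, hf⟩, hout⟩
    have he : Quot.mk _ (G.fst e) = (Quot.mk _ (G.snd e) : (G.contractEdge e).V) :=
      Quot.sound ⟨rfl, rfl⟩
    exact h (Quot.mk _ ⁻¹' X') (fun hc => hc (Iff.of_eq (congrArg (· ∈ X') he)))
      ⟨⟨f, hf⟩, hout⟩

lemma stronglyConnected_extend_iff {v : Option Bool} {O' : (G.deleteEdge e).PartialOrientation} :
    G.StronglyConnected (extend e v O') ↔ (G.contractEdge e).StronglyConnected O' ∧
      ∀ b, v = some b → ∀ X, ¬ IsDirCutAcross e b O' X := by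
  rw [StronglyConnected, not_exists, stronglyConnected_contractEdge_iff]
  constructor
  · intro h
    exact ⟨fun X he hcut => h X ((isDirCut_extend_iff_of_not_crosses he).2 hcut),
      fun b hv X hX => h X ((isDirCut_extend_iff_of_crosses hX.crosses).2 ⟨b, hv, hX⟩)⟩
  · rintro ⟨hcon, hacross⟩ X hcut
    by_cases he : G.crosses X e
    · obtain ⟨b, hv, hX⟩ := (isDirCut_extend_iff_of_crosses he).1 hcut
      exact hacross b hv X hX
    · exact hcon X he ((isDirCut_extend_iff_of_not_crosses he).1 hcut)

lemma stronglyConnected_extend_none_iff {O' : (G.deleteEdge e).PartialOrientation} :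
    G.StronglyConnected (extend e none O') ↔ (G.contractEdge e).StronglyConnected O' := by
  simp [stronglyConnected_extend_iff]

lemma stronglyConnected_extend_some_iff {b : Bool} {O' : (G.deleteEdge e).PartialOrientation} :
    G.StronglyConnected (extend e (some b) O') ↔
      (G.contractEdge e).StronglyConnected O' ∧ ∀ X, ¬ IsDirCutAcross e b O' X := by
  simp [stronglyConnected_extend_iff]

lemma stronglyConnected_extend_of_isLoop (he : G.IsLoop e) {v : Option Bool}
    {O' : (G.deleteEdge e).PartialOrientation} :
    G.StronglyConnected (extend e v O') ↔ (G.deleteEdge e).StronglyConnected O' := by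
  have hX : ∀ X, ¬ G.crosses X e := fun X hX => hX (by rw [he])
  exact not_congr (exists_congr fun X => isDirCut_extend_iff_of_not_crosses (hX X))

lemma exists_crosses_deleteEdge_of_not_isBridge (he : ¬ G.IsBridge e) {X : Set G.V}
    (hX : G.crosses X e) :
    ∃ f : (G.deleteEdge e).E, G.crosses X f.1 := by
  have hreach : G.reachOn {f | f ≠ e} (G.fst e) (G.snd e) := not_not.1 he
  obtain ⟨f, hfe, hf⟩ : ∃ f ∈ {f | f ≠ e}, G.crosses X f := by
    rcases crosses_iff.1 hX with ⟨h1, h2⟩ | ⟨h1, h2⟩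
    · exact exists_crosses_of_reachOn hreach h1 h2
    · exact exists_crosses_of_reachOn (reachOn_symm hreach) h1 h2
  exact ⟨⟨f, hfe⟩, hf⟩

lemma stronglyConnected_deleteEdge_iff (he : ¬ G.IsBridge e)
    (O' : (G.deleteEdge e).PartialOrientation) :
    (G.deleteEdge e).StronglyConnected O' ↔ (G.contractEdge e).StronglyConnected O' ∧
      ∀ b X, ¬ IsDirCutAcross e b O' X := by
  rw [stronglyConnected_contractEdge_iff]
  constructor
  · intro h
    refine ⟨fun X _ hcut => h ⟨X, hcut⟩, fun b X hX => h ⟨X, ?_⟩⟩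
    exact deleteEdge_isDirCut_iff.2
      ⟨exists_crosses_deleteEdge_of_not_isBridge he hX.crosses, hX.1⟩
  · rintro ⟨hcon, hacross⟩ ⟨X, hcut⟩
    by_cases hX : G.crosses X e
    · obtain ⟨b, ht, hh⟩ := exists_dtail_mem_of_crosses hX
      exact hacross b X ⟨hcut.2, ht, hh⟩
    · exact hcon X hX hcut

lemma isDirCut_deleteEdge_of_isOutward (hG : G.Connected)
    {O' : (G.deleteEdge e).PartialOrientation} {X : Set G.V} {u w : G.V}
    (hout : (G.deleteEdge e).IsOutward O' X) (hu : u ∈ X) (hw : w ∉ X) (he : ¬ G.crosses X e) :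
    (G.deleteEdge e).IsDirCut O' X := by
  obtain ⟨f, -, hf⟩ := exists_crosses_of_reachOn (hG u w) hu hw
  exact ⟨⟨⟨f, fun hfe => he (hfe ▸ hf)⟩, hf⟩, hout⟩

lemma IsDirCutAcross.not_isDirCutAcross_not {b : Bool} {O' : (G.deleteEdge e).PartialOrientation}
    {X Y : Set G.V} (hX : IsDirCutAcross e b O' X) (hG : G.Connected) (he : ¬ G.IsBridge e)
    (hO' : (G.contractEdge e).StronglyConnected O') : ¬ IsDirCutAcross e (!b) O' Y := by
  obtain ⟨hXout, hXt, hXh⟩ := hX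
  rintro ⟨hYout, hYh, hYt⟩
  rw [dtail_not] at hYh
  rw [dhead_not] at hYt
  rw [stronglyConnected_contractEdge_iff] at hO'
  by_cases hU : ∃ w, w ∉ X ∪ Y
  · obtain ⟨w, hw⟩ := hU
    have hXYe : ¬ G.crosses (X ∪ Y) e := by
      rw [crosses_iff_dtail_mem b]
      simp [hXt, hYh]
    exact hO' _ hXYe
      (isDirCut_deleteEdge_of_isOutward hG (hXout.union hYout) (Or.inl hXt) hw hXYe)
  by_cases hI : ∃ w, w ∈ X ∩ Y
  · obtain ⟨w, hw⟩ := hI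
    have hXYe : ¬ G.crosses (X ∩ Y) e := by
      rw [crosses_iff_dtail_mem b]
      simp [hXh, hYt]
    exact hO' _ hXYe
      (isDirCut_deleteEdge_of_isOutward hG (hXout.inter hYout) hw (fun h => hXh h.1) hXYe)
  have hYX : Y = Xᶜ := by
    ext w
    have := not_exists.1 hU w
    have := not_exists.1 hI w
    simp only [Set.mem_union, Set.mem_inter_iff, Set.mem_compl_iff] at *
    tauto
  subst hYX
  obtain ⟨f, hf⟩ := exists_crosses_deleteEdge_of_not_isBridge he (crosses_of_dtail_mem hXt hXh)
  exact not_crosses_of_isOutward_compl hXout hYout hf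

lemma isDirCutAcross_of_isBridge (he : G.IsBridge e) (b : Bool)
    (O' : (G.deleteEdge e).PartialOrientation) :
    IsDirCutAcross e b O' {w | G.reachOn {f | f ≠ e} (G.dtail e b) w} := by
  refine ⟨fun f hf => absurd hf ?_, .refl, fun h => he ?_⟩
  · have hadj : G.adjOn {f | f ≠ e} (G.fst f.1) (G.snd f.1) := ⟨f.1, f.2, Or.inl ⟨rfl, rfl⟩⟩
    have hadj' : G.adjOn {f | f ≠ e} (G.snd f.1) (G.fst f.1) := ⟨f.1, f.2, Or.inr ⟨rfl, rfl⟩⟩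
    simp only [crosses, deleteEdge_fst, deleteEdge_snd, not_not]
    exact ⟨fun h => h.tail hadj, fun h => h.tail hadj'⟩
  · cases b
    exacts [reachOn_symm h, h]

lemma StronglyConnected.eq_none_of_isBridge {O : G.PartialOrientation}
    (hO : G.StronglyConnected O) (he : G.IsBridge e) : O e = none := by
  rcases hv : O e with _ | b
  · rfl
  · rw [← extend_restrict O, hv, stronglyConnected_extend_iff] at hO
    exact (hO.2 b rfl _ (isDirCutAcross_of_isBridge he b _)).elim

theorem numStrong_eq_of_not_isBridge (hG : G.Connected) (he : ¬ G.IsBridge e) :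
    G.numStrong = (G.deleteEdge e).numStrong + 2 * (G.contractEdge e).numStrong := by
  have hsplit := card_subtype_eq_sum_extend e G.StronglyConnected
  simp only [Fintype.sum_option, Fintype.sum_bool, stronglyConnected_extend_none_iff,
    stronglyConnected_extend_some_iff] at hsplit
  have hincl :
      Nat.card {O' : (G.deleteEdge e).PartialOrientation //
          (G.contractEdge e).StronglyConnected O' ∧ ∀ X, ¬ IsDirCutAcross e true O' X} +
        Nat.card {O' : (G.deleteEdge e).PartialOrientation //
          (G.contractEdge e).StronglyConnected O' ∧ ∀ X, ¬ IsDirCutAcross e false O' X} =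
      (G.contractEdge e).numStrong + (G.deleteEdge e).numStrong := by
    refine Nat.card_subtype_add_card_subtype
      (fun O' => ⟨fun h => h.elim And.left And.left, fun hO' => ?_⟩)
      (fun O' => by rw [stronglyConnected_deleteEdge_iff he, Bool.forall_bool]; tauto)
    by_contra! h
    obtain ⟨X, hX⟩ := h.1 hO'
    obtain ⟨Y, hY⟩ := h.2 hO'
    exact hX.not_isDirCutAcross_not hG he hO' hY
  rw [hincl] at hsplit
  change G.numStrong = (G.contractEdge e).numStrong + _ at hsplit
  omega

theorem numStrong_eq_one_of_isBridge (hall : ∀ f : G.E, f = e) (he : G.IsBridge e) :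
    G.numStrong = 1 :=
  Nat.card_eq_one_iff_exists.2 ⟨⟨fun _ => none, stronglyConnected_unoriented⟩, fun O =>
    Subtype.ext <| funext fun f => hall f ▸ O.2.eq_none_of_isBridge he⟩

theorem numStrong_eq_of_isLoop (he : G.IsLoop e) :
    G.numStrong = 3 * (G.deleteEdge e).numStrong := by
  rw [numStrong, card_subtype_eq_sum_extend e]
  simp only [stronglyConnected_extend_of_isLoop he, Finset.sum_const, Finset.card_univ,
    Fintype.card_option, Fintype.card_bool, smul_eq_mul]
  rfl

end Multigraph

/-- deletion-contraction for the number of strongly connected partial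
orientations. -/
theorem stmt5 (G : Multigraph) (hG : G.Connected) (e : G.E) :
    (¬ G.IsBridge e →
      G.numStrong = (G.deleteEdge e).numStrong + 2 * (G.contractEdge e).numStrong) ∧
    ((∀ f : G.E, f = e) → G.IsBridge e → G.numStrong = 1) ∧
    (G.IsLoop e → G.numStrong = 3 * (G.deleteEdge e).numStrong) :=
  ⟨Multigraph.numStrong_eq_of_not_isBridge hG, Multigraph.numStrong_eq_one_of_isBridge,
    Multigraph.numStrong_eq_of_isLoop⟩
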